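/- arXiv:2605.01635 — 2 statements merged into one kernel-verified Lean document; each statement's English description precedes it below -/
import Mathlib

section
/- Let n, k be natural numbers. The number W of 2n-tuples (v₁, ..., v_{2n}) with entries in a set V of cardinality k, such that for every v ∈ V the number of indices i ∈ {1,...,2n} with vᵢ = v is even, satisfies W ≤ C(n)·kⁿ for a constant C(n) depending only on n (one may take C(n) = (2n)!). -/
/-!
Pair up the positions `j` and `n + j` of `Fin (2 * n)` via `p : Fin (2 * n) → Fin n`. If every
value `v` occurs an even number `c v` of times in `f`, choose `h : Fin n → V` taking each value
`v` exactly `c v / 2` times; then `h ∘ p` has the same fibre sizes as `f`, so `f = h ∘ p ∘ σ` for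
a permutation `σ`. Hence the even tuples are covered by the `(2n)! * k ^ n` pairs `(σ, h)`.
-/

open Finset Nat

section

variable {ι κ V : Type*} [Fintype ι] [Fintype κ] [DecidableEq V]

theorem exists_perm_comp_eq_of_card_fiber_eq {f g : ι → V}
    (h : ∀ v, #{i | f i = v} = #{i | g i = v}) : ∃ σ : Equiv.Perm ι, ∀ i, g (σ i) = f i :=
  ⟨Equiv.ofFiberEquiv fun v => Fintype.equivOfCardEq <| by
    simpa only [Fintype.card_subtype] using h v, Equiv.ofFiberEquiv_map _⟩

theorem exists_card_fiber_eq [Fintype V] (c : V → ℕ) (hc : ∑ v, c v = Fintype.card κ) :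
    ∃ h : κ → V, ∀ v, #{j | h j = v} = c v := by
  let e : κ ≃ Σ v, Fin (c v) := Fintype.equivOfCardEq (by simp [hc])
  refine ⟨fun j => (e j).1, fun v => ?_⟩
  rw [← Fintype.card_subtype,
    Fintype.card_congr (e.subtypeEquivOfSubtype (p := fun s => s.1 = v)),
    Fintype.card_congr (Equiv.sigmaSubtype v), Fintype.card_fin]

theorem card_fiber_comp_eq_mul [DecidableEq κ] {p : ι → κ} {m : ℕ}
    (hp : ∀ j, #{i | p i = j} = m) (h : κ → V) (v : V) :
    #{i | h (p i) = v} = m * #{j | h j = v} := by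
  rw [card_eq_sum_card_fiberwise (f := p) (t := {j | h j = v}) (by intro i; simp),
    sum_congr rfl fun j hj => ?_, sum_const, smul_eq_mul, mul_comm]
  rw [← hp j, filter_filter]
  congr 1
  ext i
  simp only [mem_filter, mem_univ, true_and] at hj ⊢
  exact ⟨And.right, fun hi => ⟨hi ▸ hj, hi⟩⟩

theorem exists_perm_comp_eq_of_even_card_fiber [DecidableEq κ] [Fintype V] {p : ι → κ}
    (hp : ∀ j, #{i | p i = j} = 2) {f : ι → V} (hf : ∀ v, Even #{i | f i = v}) :
    ∃ (σ : Equiv.Perm ι) (h : κ → V), ∀ i, h (p (σ i)) = f i := by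
  have hsum : ∑ v, #{i | f i = v} / 2 = Fintype.card κ := by
    have hf_sum : ∑ v, #{i | f i = v} = Fintype.card ι :=
      (card_eq_sum_card_fiberwise fun i _ => mem_univ (f i)).symm
    have hp_sum : ∑ j, #{i | p i = j} = Fintype.card ι :=
      (card_eq_sum_card_fiberwise fun i _ => mem_univ (p i)).symm
    simp only [hp, sum_const, smul_eq_mul] at hp_sum
    rw [← Nat.sum_div fun v _ => (hf v).two_dvd, hf_sum, ← hp_sum, Nat.mul_div_cancel _ two_pos,
      Finset.card_univ]
  obtain ⟨h, hh⟩ := exists_card_fiber_eq _ hsum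
  obtain ⟨σ, hσ⟩ := exists_perm_comp_eq_of_card_fiber_eq (f := f) (g := h ∘ p) fun v => by
    rw [Function.comp_def, card_fiber_comp_eq_mul hp, hh, Nat.mul_div_cancel' (hf v).two_dvd]
  exact ⟨σ, h, hσ⟩

theorem card_filter_even_card_fiber_le [DecidableEq ι] [DecidableEq κ] [Fintype V] {p : ι → κ}
    (hp : ∀ j, #{i | p i = j} = 2) :
    #{f : ι → V | ∀ v, Even #{i | f i = v}}
      ≤ (Fintype.card ι)! * Fintype.card V ^ Fintype.card κ :=
  calc #{f : ι → V | ∀ v, Even #{i | f i = v}}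
      ≤ #(univ.image fun x : Equiv.Perm ι × (κ → V) => x.2 ∘ p ∘ x.1) := by
        refine card_le_card fun f hf => ?_
        obtain ⟨σ, h, hσ⟩ := exists_perm_comp_eq_of_even_card_fiber hp (mem_filter.1 hf).2
        exact mem_image.2 ⟨(σ, h), mem_univ _, funext hσ⟩
    _ ≤ Fintype.card (Equiv.Perm ι × (κ → V)) := card_image_le
    _ = (Fintype.card ι)! * Fintype.card V ^ Fintype.card κ := by
        rw [Fintype.card_prod, Fintype.card_perm, Fintype.card_fun]

theorem card_filter_snd_finProdFinEquiv_symm_eq (m n : ℕ) (j : Fin n) :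
    #{i : Fin (m * n) | (finProdFinEquiv.symm i).2 = j} = m := by
  rw [card_equiv finProdFinEquiv.symm (t := univ ×ˢ {j}) (by simp [eq_comm]), card_product,
    card_singleton, Finset.card_univ, Fintype.card_fin, mul_one]

end

theorem stmt_5 (n k : ℕ) (V : Type*) [Fintype V] [DecidableEq V]
    (hk : Fintype.card V = k) :
    (Finset.univ.filter (fun f : Fin (2 * n) → V =>
        ∀ v : V, Even (Finset.univ.filter (fun i => f i = v)).card)).card
      ≤ (2 * n).factorial * k ^ n := by
  simpa [hk] using
    card_filter_even_card_fiber_le (V := V) (card_filter_snd_finProdFinEquiv_symm_eq 2 n)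
end

section
/- Let F be a field of characteristic ≠ 2 and let t₁, ..., t_m be elements of a field extension of F(x) (x transcendental over F) with tᵢ² = x - aᵢ for pairwise distinct a₁, ..., a_m ∈ F. Then t₁, ..., t_m are linearly independent over F(x). -/
/-!
Fix `j`. Expanding at `x = a_j` in the local parameter `s = √(x - a_j)` embeds `F(x)` into the
fraction field `Q` of `k⟦s⟧`, `k` an algebraic closure of `F`, and the embedding extends to
`F(x)(t₁, …, t_m) → Q̄`. There `t_j ↦ ±s`, while for `i ≠ j` the image of `t_i` is
`±√(s² + a_j - a_i)`, a power series which Hensel's lemma makes even in `s`. Every element of `F(x)`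
is even as well, so applying `s ↦ -s` to a relation `∑ g_i t_i = 0` and subtracting leaves
`2 g_j t_j = 0`.
-/

open scoped PowerSeries

theorem eq_zero_of_sum_mul_eq_zero_of_map_eq_neg {R ι : Type*} [CommRing R] [IsDomain R]
    [Fintype ι] (h2 : (2 : R) ≠ 0) (σ : R →+* R) {c w : ι → R} {j : ι}
    (hc : ∀ i, σ (c i) = c i) (hw : ∀ i ≠ j, σ (w i) = w i) (hwj : σ (w j) = -w j)
    (hwj0 : w j ≠ 0) (hsum : ∑ i, c i * w i = 0) : c j = 0 := by
  have hσsum : ∑ i, c i * σ (w i) = 0 := by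
    simpa only [map_sum, map_mul, hc, map_zero] using congrArg σ hsum
  have hdiff : ∑ i, c i * (w i - σ (w i)) = 0 := by
    simp only [mul_sub, Finset.sum_sub_distrib, hsum, hσsum, sub_zero]
  rw [Finset.sum_eq_single j (fun i _ hij ↦ by rw [hw i hij, sub_self, mul_zero])
    (fun h ↦ absurd (Finset.mem_univ j) h), hwj] at hdiff
  have : 2 * w j * c j = 0 := by linear_combination hdiff
  simpa [h2, hwj0] using this

open Polynomial in
theorem IsAlgClosed.exists_family_of_isAlgebraic {A K Ω ι : Type*} [Field A] [Field K]
    [Algebra A K] [Field Ω] [IsAlgClosed Ω] [Fintype ι] (f : A →+* Ω) (t : ι → K)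
    (ht : ∀ i, IsAlgebraic A (t i)) :
    ∃ u : ι → Ω, (∀ i (p : A[X]), aeval (t i) p = 0 → p.eval₂ f (u i) = 0) ∧
      ∀ g : ι → A, ∑ i, g i • t i = 0 → ∑ i, f (g i) * u i = 0 := by
  let _ := f.toAlgebra
  let L := IntermediateField.adjoin A (Set.range t)
  have : Algebra.IsAlgebraic A L :=
    IntermediateField.isAlgebraic_adjoin (by rintro _ ⟨i, rfl⟩; exact (ht i).isIntegral)
  let ψ : L →ₐ[A] Ω := IsAlgClosed.lift
  let T : ι → L := fun i ↦ ⟨t i, IntermediateField.subset_adjoin _ _ ⟨i, rfl⟩⟩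
  refine ⟨fun i ↦ ψ (T i), fun i p hp ↦ ?_, fun g hg ↦ ?_⟩
  · have hT : aeval (T i) p = 0 := Subtype.val_injective (by rwa [← IntermediateField.aeval_coe])
    simpa [← aeval_algHom_apply, aeval_def, RingHom.algebraMap_toAlgebra] using congrArg ψ hT
  · have hT : ∑ i, g i • T i = 0 := Subtype.val_injective (by simpa using hg)
    simpa [Algebra.smul_def, RingHom.algebraMap_toAlgebra] using congrArg ψ hT

namespace PowerSeries

theorem evalNegHom_C {A : Type*} [CommRing A] (b : A) : evalNegHom (C b) = C b := by
  ext n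
  rcases n with _ | n <;> simp [evalNegHom, coeff_rescale, coeff_C]

variable {k : Type*} [Field k]

theorem constantCoeff_evalNegHom (f : k⟦X⟧) : constantCoeff (evalNegHom f) = constantCoeff f := by
  rw [← coeff_zero_eq_constantCoeff_apply, evalNegHom, coeff_rescale, pow_zero, one_mul,
    coeff_zero_eq_constantCoeff_apply]

theorem exists_sq_eq_X_sq_add_C_sq (h2 : (2 : k) ≠ 0) {d : k} (hd : d ≠ 0) :
    ∃ w : k⟦X⟧, w ^ 2 = X ^ 2 + C (d ^ 2) ∧ evalNegHom w = w := by
  set P : Polynomial k⟦X⟧ := .X ^ 2 - .C (X ^ 2 + C (d ^ 2))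
  have hP_deriv : P.derivative.eval (C d) = C (2 * d) := by
    rw [Polynomial.derivative_sub, Polynomial.derivative_C, Polynomial.derivative_X_pow]
    simp [map_ofNat C 2]
  obtain ⟨w, hroot, hw⟩ := HenselianRing.is_henselian (I := Ideal.span {X}) P
    (Polynomial.monic_X_pow_sub_C _ two_ne_zero) (C d)
    (Ideal.mem_span_singleton'.2 ⟨-X, by simp [P]; ring⟩)
    (hP_deriv ▸ ((mul_ne_zero h2 hd).isUnit.map C).map _)
  have hsq : w ^ 2 = X ^ 2 + C (d ^ 2) := by simpa [P, sub_eq_zero] using hroot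
  have hw0 : constantCoeff w = d := by
    rwa [Ideal.mem_span_singleton, X_dvd_iff, map_sub, constantCoeff_C, sub_eq_zero] at hw
  refine ⟨w, hsq, ?_⟩
  have hσsq : evalNegHom w ^ 2 = w ^ 2 := by
    rw [← map_pow, hsq, map_add, map_pow, evalNegHom_X, evalNegHom_C, neg_sq]
  refine (sq_eq_sq_iff_eq_or_eq_neg.1 hσsq).resolve_right fun h ↦ ?_
  have h0 := congrArg constantCoeff h
  rw [constantCoeff_evalNegHom, map_neg, hw0] at h0
  exact mul_ne_zero h2 hd (by linear_combination h0)

theorem transcendental_X_sq_add_C (F : Type*) [Field F] [Algebra F k] (a : k) :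
    Transcendental F (X ^ 2 + C a : k⟦X⟧) := by
  have hpoly : Transcendental k (.X ^ 2 + .C a : Polynomial k) :=
    Polynomial.transcendental _ (by simp) (by simp)
  have hinj : Function.Injective (algebraMap (Polynomial k) k⟦X⟧) := fun p q h ↦
    Polynomial.coe_injective k (by simpa [algebraMap_apply'] using h)
  have hcoe : Transcendental k (X ^ 2 + C a : k⟦X⟧) := by
    simpa [algebraMap_apply'] using (transcendental_algebraMap_iff hinj).2 hpoly
  exact hcoe.restrictScalars (algebraMap F k).injective

noncomputable def evalNegFrac : FractionRing k⟦X⟧ →+* FractionRing k⟦X⟧ :=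
  IsLocalization.map (M := nonZeroDivisors k⟦X⟧) (T := nonZeroDivisors k⟦X⟧) _ evalNegHom
    (nonZeroDivisors_le_comap_nonZeroDivisors_of_injective _
      (rescale_injective (neg_ne_zero.2 one_ne_zero)))

theorem evalNegFrac_algebraMap (f : k⟦X⟧) :
    evalNegFrac (algebraMap _ _ f) = algebraMap _ (FractionRing k⟦X⟧) (evalNegHom f) := by
  rw [evalNegFrac, IsLocalization.map_eq]

theorem exists_algebraMap_eq_of_sq_eq_X_sq_add_C [IsAlgClosed k] (h2 : (2 : k) ≠ 0)
    {Ω : Type*} [Field Ω] [Algebra (FractionRing k⟦X⟧) Ω] {c : k} {u : Ω}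
    (hu : u ^ 2 = algebraMap _ Ω (algebraMap k⟦X⟧ (FractionRing k⟦X⟧) (X ^ 2 + C c))) :
    ∃ w : FractionRing k⟦X⟧, algebraMap _ Ω w = u ∧ w ≠ 0 ∧
      (c = 0 → evalNegFrac w = -w) ∧ (c ≠ 0 → evalNegFrac w = w) := by
  obtain ⟨v, hv, hv_odd, hv_even⟩ : ∃ v : k⟦X⟧, v ^ 2 = X ^ 2 + C c ∧
      (c = 0 → evalNegHom v = -v) ∧ (c ≠ 0 → evalNegHom v = v) := by
    rcases eq_or_ne c 0 with rfl | hc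
    · exact ⟨X, by simp, fun _ ↦ evalNegHom_X, fun h ↦ absurd rfl h⟩
    · obtain ⟨d, rfl⟩ := IsAlgClosed.exists_pow_nat_eq c two_pos
      obtain ⟨v, hv, hv'⟩ := exists_sq_eq_X_sq_add_C_sq h2 (ne_zero_pow two_ne_zero hc)
      exact ⟨v, hv, fun h ↦ absurd h hc, fun _ ↦ hv'⟩
  have hv0 : v ≠ 0 := by
    rintro rfl
    simpa using congrArg (coeff 2) hv
  obtain ⟨s, hs, hsu⟩ : ∃ s, (s = v ∨ s = -v) ∧
      algebraMap (FractionRing k⟦X⟧) Ω (algebraMap k⟦X⟧ (FractionRing k⟦X⟧) s) = u := by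
    rcases sq_eq_sq_iff_eq_or_eq_neg.1 (hu.trans (by rw [← hv, map_pow, map_pow])) with h | h
    · exact ⟨v, .inl rfl, h.symm⟩
    · exact ⟨-v, .inr rfl, by simp [h]⟩
  refine ⟨_, hsu, ?_, fun hc ↦ ?_, fun hc ↦ ?_⟩ <;> rcases hs with rfl | rfl <;>
    simp_all [evalNegFrac_algebraMap]

end PowerSeries

section SubstSqAdd

variable (F : Type*) [Field F] {k : Type*} [Field k] [Algebra F k]

noncomputable def RatFunc.substSqAdd (a : k) : RatFunc F →+* FractionRing k⟦X⟧ :=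
  RatFunc.liftRingHom
    ((algebraMap k⟦X⟧ _).comp (Polynomial.aeval (PowerSeries.X ^ 2 + PowerSeries.C a)).toRingHom)
    (nonZeroDivisors_le_comap_nonZeroDivisors_of_injective _ <|
      (IsFractionRing.injective k⟦X⟧ (FractionRing k⟦X⟧)).comp
        (transcendental_iff_injective.1 (PowerSeries.transcendental_X_sq_add_C F a)))

namespace RatFunc

variable {F}

theorem substSqAdd_algebraMap (a : k) (p : Polynomial F) :
    substSqAdd F a (algebraMap _ _ p) =
      algebraMap k⟦X⟧ _ (Polynomial.aeval (PowerSeries.X ^ 2 + PowerSeries.C a) p) :=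
  liftRingHom_algebraMap _ _ _

theorem substSqAdd_X_sub_C (a : k) (b : F) :
    substSqAdd F a (X - C b) =
      algebraMap k⟦X⟧ _ (PowerSeries.X ^ 2 + PowerSeries.C (a - algebraMap F k b)) := by
  rw [← algebraMap_X, ← algebraMap_C, ← map_sub, substSqAdd_algebraMap]
  simp [PowerSeries.algebraMap_apply]
  ring

theorem evalNegFrac_substSqAdd (a : k) (r : RatFunc F) :
    PowerSeries.evalNegFrac (substSqAdd F a r) = substSqAdd F a r := by
  suffices h : (PowerSeries.evalNegFrac.comp (substSqAdd F a)).comp (algebraMap _ (RatFunc F)) =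
      (substSqAdd F a).comp (algebraMap _ _) from
    DFunLike.congr_fun (IsLocalization.ringHom_ext (nonZeroDivisors (Polynomial F)) h) r
  refine Polynomial.ringHom_ext (fun b ↦ ?_) ?_ <;>
    simp only [RingHom.comp_apply, substSqAdd_algebraMap, PowerSeries.evalNegFrac_algebraMap]
  · simp [PowerSeries.algebraMap_apply, PowerSeries.evalNegHom_C]
  · simp [PowerSeries.evalNegHom_C]

end RatFunc

end SubstSqAdd

theorem stmt_7 (F : Type*) [Field F] (hchar : (2 : F) ≠ 0) (m : ℕ) (K : Type*) [Field K]
    [Algebra (RatFunc F) K] (a : Fin m → F) (ha : Function.Injective a) (t : Fin m → K)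
    (ht : ∀ i, (t i) ^ 2 = algebraMap (RatFunc F) K (RatFunc.X - RatFunc.C (a i))) :
    LinearIndependent (RatFunc F) t := by
  rw [Fintype.linearIndependent_iff]
  intro g hg j
  let k := AlgebraicClosure F
  let Q := FractionRing k⟦X⟧
  let ι := RatFunc.substSqAdd F (algebraMap F k (a j))
  have h2 : (2 : k) ≠ 0 := map_ofNat (algebraMap F k) 2 ▸ (map_ne_zero _).2 hchar
  obtain ⟨u, hu_sq, hu_rel⟩ := IsAlgClosed.exists_family_of_isAlgebraic
    ((algebraMap Q (AlgebraicClosure Q)).comp ι) t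
    (fun i ↦ (ht i ▸ isAlgebraic_algebraMap _).of_pow two_pos)
  have hu : ∀ i, u i ^ 2 = algebraMap Q _ (algebraMap k⟦X⟧ Q
      (PowerSeries.X ^ 2 + PowerSeries.C (algebraMap F k (a j) - algebraMap F k (a i)))) := by
    intro i
    have := hu_sq i (.X ^ 2 - .C (RatFunc.X - RatFunc.C (a i))) (by simp [ht i])
    rw [← RatFunc.substSqAdd_X_sub_C]
    simpa [sub_eq_zero] using this
  choose w hwu hw0 hw_odd hw_even using fun i ↦
    PowerSeries.exists_algebraMap_eq_of_sq_eq_X_sq_add_C h2 (hu i)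
  have h2Q : (2 : Q) ≠ 0 := map_ofNat (algebraMap k Q) 2 ▸ (map_ne_zero _).2 h2
  apply ι.injective
  rw [map_zero]
  refine eq_zero_of_sum_mul_eq_zero_of_map_eq_neg (c := fun i ↦ ι (g i)) (w := w) h2Q
    PowerSeries.evalNegFrac
    (fun i ↦ RatFunc.evalNegFrac_substSqAdd _ (g i))
    (fun i hi ↦ hw_even i (sub_ne_zero.2 ((algebraMap F k).injective.ne (ha.ne hi.symm))))
    (hw_odd j (sub_self _)) (hw0 j) ?_
  apply (algebraMap Q (AlgebraicClosure Q)).injective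
  simpa [← hwu] using hu_rel g hg
end
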